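/- In Schlumprecht's space, for any 1 < p ≤ ∞, any n ∈ ℕ, and any normalized block basis x₁ < x₂ < ⋯ < x_n of the unit vector basis, one has ‖(1/n^{1/p})·Σᵢ xᵢ‖ ≥ n^{1−1/p}/f(n); consequently, since f(n)/n^{1−1/p} → 0, no block basis of (eᵢ) is (1+ε)-equivalent to the ℓ_p unit basis for all n. -/

import Mathlib

open scoped Classical

noncomputable def f (l : ℕ) : ℝ := Real.logb 2 (l + 1)

/-- `E₁ < E₂ < ⋯` : the finite sets are successive. -/
def Succ {l : ℕ} (E : Fin l → Finset ℕ) : Prop :=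
  ∀ i j : Fin l, i < j → ∀ a ∈ E i, ∀ b ∈ E j, a < b

/-- Restriction `E(x)` of `x` to the finite set `E`. -/
noncomputable def restr (x : ℕ →₀ ℝ) (E : Finset ℕ) : ℕ →₀ ℝ :=
  x.filter (· ∈ E)

/-- The inductively defined norms `|·|_k`. -/
noncomputable def normK : ℕ → (ℕ →₀ ℝ) → ℝ
  | 0, x => ⨆ n, |x n|
  | k + 1, x => ⨆ l : ℕ, ⨆ E : Fin (l + 1) → Finset ℕ,
      if Succ E then (1 / f (l + 1)) * ∑ i, normK k (restr x (E i)) else 0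

/-- The Schlumprecht norm `‖x‖ = sup_k |x|_k`. -/
noncomputable def S (x : ℕ →₀ ℝ) : ℝ := ⨆ k, normK k x

/-- `x₁ < x₂ < ⋯ < x_n` : a block sequence (successive supports). -/
def IsBlock {n : ℕ} (x : Fin n → (ℕ →₀ ℝ)) : Prop :=
  ∀ i j : Fin n, i < j → ∀ a ∈ (x i).support, ∀ b ∈ (x j).support, a < b

/-! ### Auxiliary lemmas -/

lemma one_le_f (l : ℕ) : 1 ≤ f (l + 1) := by
  unfold f
  have h2 : Real.logb 2 2 = 1 := Real.logb_self_eq_one (by norm_num)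
  calc (1 : ℝ) = Real.logb 2 2 := h2.symm
    _ ≤ Real.logb 2 ((l + 1 : ℕ) + 1) := by
        apply Real.logb_le_logb_of_le (by norm_num) (by norm_num)
        push_cast; linarith [Nat.cast_nonneg (α := ℝ) l]

lemma f_nonneg (l : ℕ) : 0 ≤ f l := by
  unfold f
  apply Real.logb_nonneg (by norm_num)
  push_cast; linarith [Nat.cast_nonneg (α := ℝ) l]

/-- The `ℓ¹` norm. -/
noncomputable def L1 (x : ℕ →₀ ℝ) : ℝ := ∑ a ∈ x.support, |x a|

lemma L1_nonneg (x : ℕ →₀ ℝ) : 0 ≤ L1 x :=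
  Finset.sum_nonneg fun _ _ => abs_nonneg _

lemma abs_apply_le_L1 (x : ℕ →₀ ℝ) (n : ℕ) : |x n| ≤ L1 x := by
  by_cases h : n ∈ x.support
  · exact Finset.single_le_sum (f := fun a => |x a|) (fun _ _ => abs_nonneg _) h
  · rw [Finsupp.notMem_support_iff.mp h, abs_zero]; exact L1_nonneg x

lemma L1_restr (x : ℕ →₀ ℝ) (E : Finset ℕ) :
    L1 (restr x E) = ∑ a ∈ x.support.filter (· ∈ E), |x a| := by
  unfold L1 restr
  rw [Finsupp.support_filter]
  refine Finset.sum_congr rfl fun a ha => ?_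
  rw [Finsupp.filter_apply_pos _ _ (Finset.mem_filter.mp ha).2]

lemma sum_L1_restr_le {l : ℕ} (x : ℕ →₀ ℝ) (E : Fin l → Finset ℕ) (hE : Succ E) :
    ∑ i, L1 (restr x (E i)) ≤ L1 x := by
  simp only [L1_restr]
  have hdisj : ((Finset.univ : Finset (Fin l)) : Set (Fin l)).PairwiseDisjoint
      (fun i => x.support.filter (· ∈ E i)) := by
    intro i _ j _ hij
    refine Finset.disjoint_left.mpr fun a hai haj => ?_
    have hi := (Finset.mem_filter.mp hai).2
    have hj := (Finset.mem_filter.mp haj).2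
    rcases lt_or_gt_of_ne hij with h | h
    · exact lt_irrefl a (hE i j h a hi a hj)
    · exact lt_irrefl a (hE j i h a hj a hi)
  rw [← Finset.sum_biUnion hdisj]
  apply Finset.sum_le_sum_of_subset_of_nonneg
  · intro a ha
    rcases Finset.mem_biUnion.mp ha with ⟨i, _, hai⟩
    exact (Finset.mem_filter.mp hai).1
  · intro a _ _; exact abs_nonneg _

lemma normK_nonneg : ∀ (k : ℕ) (x : ℕ →₀ ℝ), 0 ≤ normK k x
  | 0, x => Real.iSup_nonneg fun n => abs_nonneg _
  | k + 1, x => by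
    apply Real.iSup_nonneg fun l => Real.iSup_nonneg fun E => ?_
    split
    · exact mul_nonneg (div_nonneg zero_le_one (f_nonneg _))
        (Finset.sum_nonneg fun i _ => normK_nonneg k _)
    · exact le_rfl

lemma ite_term_le (k l : ℕ) (x : ℕ →₀ ℝ) (E : Fin (l + 1) → Finset ℕ)
    (IH : ∀ y : ℕ →₀ ℝ, normK k y ≤ L1 y) :
    (if Succ E then (1 / f (l + 1)) * ∑ i, normK k (restr x (E i)) else 0) ≤ L1 x := by
  split
  case isTrue h =>
    have hsum : ∑ i, normK k (restr x (E i)) ≤ L1 x :=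
      le_trans (Finset.sum_le_sum fun i _ => IH _) (sum_L1_restr_le x E h)
    have hsnn : 0 ≤ ∑ i, normK k (restr x (E i)) :=
      Finset.sum_nonneg fun i _ => normK_nonneg k _
    have hf : 1 / f (l + 1) ≤ 1 := by
      rw [div_le_one (lt_of_lt_of_le one_pos (one_le_f l))]
      exact one_le_f l
    calc (1 / f (l + 1)) * ∑ i, normK k (restr x (E i))
        ≤ 1 * ∑ i, normK k (restr x (E i)) := mul_le_mul_of_nonneg_right hf hsnn
      _ = ∑ i, normK k (restr x (E i)) := one_mul _
      _ ≤ L1 x := hsum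
  case isFalse => exact L1_nonneg x

lemma normK_le_L1 : ∀ (k : ℕ) (x : ℕ →₀ ℝ), normK k x ≤ L1 x
  | 0, x => Real.iSup_le (abs_apply_le_L1 x) (L1_nonneg x)
  | k + 1, x =>
    Real.iSup_le (fun l => Real.iSup_le
        (fun E => ite_term_le k l x E (normK_le_L1 k)) (L1_nonneg x))
      (L1_nonneg x)

lemma normK_succ_ge (k l : ℕ) (x : ℕ →₀ ℝ) (E : Fin (l + 1) → Finset ℕ) (hE : Succ E) :
    (1 / f (l + 1)) * ∑ i, normK k (restr x (E i)) ≤ normK (k + 1) x := by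
  show _ ≤ ⨆ l : ℕ, ⨆ E : Fin (l + 1) → Finset ℕ,
      if Succ E then (1 / f (l + 1)) * ∑ i, normK k (restr x (E i)) else 0
  have hinner : ∀ l' : ℕ, BddAbove (Set.range fun E : Fin (l' + 1) → Finset ℕ =>
      if Succ E then (1 / f (l' + 1)) * ∑ i, normK k (restr x (E i)) else 0) := by
    intro l'
    exact ⟨L1 x, Set.forall_mem_range.mpr fun E => ite_term_le k l' x E (normK_le_L1 k)⟩
  have houter : BddAbove (Set.range fun l' : ℕ => ⨆ E : Fin (l' + 1) → Finset ℕ,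
      if Succ E then (1 / f (l' + 1)) * ∑ i, normK k (restr x (E i)) else 0) :=
    ⟨L1 x, Set.forall_mem_range.mpr fun l' =>
      Real.iSup_le (fun E => ite_term_le k l' x E (normK_le_L1 k)) (L1_nonneg x)⟩
  refine le_trans ?_ (le_ciSup houter l)
  refine le_trans ?_ (le_ciSup (hinner l) E)
  rw [if_pos hE]

lemma restr_support_self (x : ℕ →₀ ℝ) : restr x x.support = x := by
  ext a
  rw [restr, Finsupp.filter_apply]
  split
  · rfl
  · next h => exact (Finsupp.notMem_support_iff.mp h).symm

lemma normK_mono (x : ℕ →₀ ℝ) : Monotone fun k => normK k x := by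
  apply monotone_nat_of_le_succ
  intro k
  have h := normK_succ_ge k 0 x (fun _ => x.support)
    (fun i j hij => absurd hij (by omega))
  have hf1 : f 1 = 1 := by
    unfold f; norm_num
  simpa [hf1, restr_support_self] using h

lemma bddAbove_normK (x : ℕ →₀ ℝ) : BddAbove (Set.range fun k => normK k x) :=
  ⟨L1 x, Set.forall_mem_range.mpr fun k => normK_le_L1 k x⟩

lemma normK_le_S (k : ℕ) (x : ℕ →₀ ℝ) : normK k x ≤ S x :=
  le_ciSup (bddAbove_normK x) k

lemma S_nonneg (x : ℕ →₀ ℝ) : 0 ≤ S x :=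
  Real.iSup_nonneg fun k => normK_nonneg k x

lemma restr_smul (c : ℝ) (x : ℕ →₀ ℝ) (E : Finset ℕ) :
    restr (c • x) E = c • restr x E := by
  unfold restr
  exact Finsupp.filter_smul

lemma normK_smul : ∀ (k : ℕ) (c : ℝ), 0 ≤ c → ∀ (x : ℕ →₀ ℝ),
    normK k (c • x) = c * normK k x
  | 0, c, hc, x => by
    show (⨆ n, |(c • x) n|) = c * ⨆ n, |x n|
    rw [Real.mul_iSup_of_nonneg hc]
    apply iSup_congr
    intro n
    rw [Finsupp.smul_apply, smul_eq_mul, abs_mul, abs_of_nonneg hc]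
  | k + 1, c, hc, x => by
    show (⨆ l : ℕ, ⨆ E : Fin (l + 1) → Finset ℕ,
        if Succ E then (1 / f (l + 1)) * ∑ i, normK k (restr (c • x) (E i)) else 0)
      = c * ⨆ l : ℕ, ⨆ E : Fin (l + 1) → Finset ℕ,
        if Succ E then (1 / f (l + 1)) * ∑ i, normK k (restr x (E i)) else 0
    rw [Real.mul_iSup_of_nonneg hc]
    apply iSup_congr
    intro l
    rw [Real.mul_iSup_of_nonneg hc]
    apply iSup_congr
    intro E
    rw [mul_ite, mul_zero]
    by_cases h : Succ E
    · rw [if_pos h, if_pos h]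
      have hs : (∑ i, normK k (restr (c • x) (E i)))
          = ∑ i, c * normK k (restr x (E i)) :=
        Finset.sum_congr rfl fun i _ => by rw [restr_smul, normK_smul k c hc]
      rw [hs, ← Finset.mul_sum]
      ring
    · rw [if_neg h, if_neg h]

lemma restr_eq_zero_of_disjoint (x : ℕ →₀ ℝ) (E : Finset ℕ)
    (h : Disjoint x.support E) : restr x E = 0 := by
  ext a
  rw [restr, Finsupp.filter_apply]
  split
  · next ha =>
    by_contra hne
    exact Finset.disjoint_left.mp h (Finsupp.mem_support_iff.mpr hne) ha
  · rfl

lemma key_lower (m : ℕ) (x : Fin (m + 1) → (ℕ →₀ ℝ)) (hB : IsBlock x)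
    (hN : ∀ i, S (x i) = 1) (d : ℝ) (hd : 0 < d) :
    d * ((m + 1 : ℕ) : ℝ) / f (m + 1) ≤ S (d • ∑ i, x i) := by
  have hfN : (1 : ℝ) ≤ f (m + 1) := one_le_f m
  have hfNpos : 0 < f (m + 1) := lt_of_lt_of_le one_pos hfN
  have hrestr : ∀ i : Fin (m + 1),
      restr (d • ∑ j, x j) ((x i).support) = d • x i := by
    intro i
    rw [restr_smul]
    congr 1
    have h1 : restr (∑ j, x j) ((x i).support)
        = ∑ j, restr (x j) ((x i).support) := Finsupp.filter_sum _ _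
    rw [h1, Finset.sum_eq_single i]
    · exact restr_support_self (x i)
    · intro j _ hji
      apply restr_eq_zero_of_disjoint
      refine Finset.disjoint_left.mpr fun a haj hai => ?_
      rcases lt_or_gt_of_ne hji with h | h
      · exact lt_irrefl a (hB j i h a haj a hai)
      · exact lt_irrefl a (hB i j h a hai a haj)
    · intro h; exact absurd (Finset.mem_univ i) h
  have key : ∀ K : ℕ, (d / f (m + 1)) * ∑ i : Fin (m + 1), normK K (x i)
      ≤ S (d • ∑ i, x i) := by
    intro K
    have h1 := normK_succ_ge K m (d • ∑ i, x i) (fun i => (x i).support) hB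
    have h2 : ∀ i : Fin (m + 1),
        normK K (restr (d • ∑ j, x j) ((x i).support)) = d * normK K (x i) := by
      intro i; rw [hrestr i, normK_smul K d hd.le]
    calc (d / f (m + 1)) * ∑ i : Fin (m + 1), normK K (x i)
        = (1 / f (m + 1)) * ∑ i : Fin (m + 1), d * normK K (x i) := by
          rw [← Finset.mul_sum]; ring
      _ = (1 / f (m + 1)) * ∑ i : Fin (m + 1),
            normK K (restr (d • ∑ j, x j) ((x i).support)) := by
          simp only [h2]
      _ ≤ normK (K + 1) (d • ∑ i, x i) := h1
      _ ≤ S (d • ∑ i, x i) := normK_le_S _ _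
  have hlim : Filter.Tendsto
      (fun K => (d / f (m + 1)) * ∑ i : Fin (m + 1), normK K (x i))
      Filter.atTop (nhds ((d / f (m + 1)) * ((m + 1 : ℕ) : ℝ))) := by
    apply Filter.Tendsto.const_mul
    have h3 : ∀ i : Fin (m + 1), Filter.Tendsto (fun K => normK K (x i))
        Filter.atTop (nhds 1) := by
      intro i
      have h1 := tendsto_atTop_ciSup (normK_mono (x i)) (bddAbove_normK (x i))
      have h2 : (⨆ k, normK k (x i)) = 1 := hN i
      rwa [h2] at h1
    have hsum := tendsto_finset_sum Finset.univ (fun i (_ : i ∈ Finset.univ) => h3 i)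
    simpa using hsum
  have hfin : (d / f (m + 1)) * ((m + 1 : ℕ) : ℝ) ≤ S (d • ∑ i, x i) :=
    le_of_tendsto hlim (Filter.Eventually.of_forall key)
  calc d * ((m + 1 : ℕ) : ℝ) / f (m + 1)
      = (d / f (m + 1)) * ((m + 1 : ℕ) : ℝ) := by ring
    _ ≤ S (d • ∑ i, x i) := hfin

theorem stmt15 (p : ℝ) (hp : 1 < p) :
    (∀ (n : ℕ) (x : Fin n → (ℕ →₀ ℝ)), IsBlock x → (∀ i, S (x i) = 1) →
      (n : ℝ) ^ ((1 : ℝ) - 1 / p) / f n ≤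
        S (((1 : ℝ) / (n : ℝ) ^ ((1 : ℝ) / p)) • ∑ i, x i)) ∧
    Filter.Tendsto (fun n : ℕ => f n / (n : ℝ) ^ ((1 : ℝ) - 1 / p))
      Filter.atTop (nhds 0) := by
  have hp0 : 0 < p := lt_trans one_pos hp
  constructor
  · intro n z hBz hNz
    cases n with
    | zero =>
      have hf0 : f 0 = 0 := by unfold f; norm_num
      rw [hf0, div_zero]
      exact S_nonneg _
    | succ m =>
      have hNpos : (0 : ℝ) < ((m + 1 : ℕ) : ℝ) := by positivity
      have hd : (0 : ℝ) < 1 / ((m + 1 : ℕ) : ℝ) ^ ((1 : ℝ) / p) := by positivity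
      have hkey := key_lower m z hBz hNz _ hd
      have heq : ((m + 1 : ℕ) : ℝ) ^ ((1 : ℝ) - 1 / p) / f (m + 1)
          = (1 / ((m + 1 : ℕ) : ℝ) ^ ((1 : ℝ) / p)) * ((m + 1 : ℕ) : ℝ) / f (m + 1) := by
        rw [Real.rpow_sub hNpos, Real.rpow_one]
        ring
      rw [heq]
      exact hkey
  · -- f n / n^(1-1/p) → 0
    have hq : 0 < 1 - 1 / p := by
      have : 1 / p < 1 := by rw [div_lt_one hp0]; exact hp
      linarith
    set q : ℝ := 1 - 1 / p with hqdef
    have hlog : Filter.Tendsto (fun n : ℕ => Real.log (n : ℝ) / (n : ℝ) ^ q)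
        Filter.atTop (nhds 0) :=
      ((isLittleO_log_rpow_atTop hq).tendsto_div_nhds_zero).comp
        tendsto_natCast_atTop_atTop
    have hinv : Filter.Tendsto (fun n : ℕ => ((n : ℝ) ^ q)⁻¹) Filter.atTop (nhds 0) := by
      apply Filter.Tendsto.inv_tendsto_atTop
      exact (tendsto_rpow_atTop hq).comp tendsto_natCast_atTop_atTop
    have hupper : Filter.Tendsto
        (fun n : ℕ => (Real.log 2) * ((n : ℝ) ^ q)⁻¹ + Real.log (n : ℝ) / (n : ℝ) ^ q)
        Filter.atTop (nhds 0) := by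
      have := (hinv.const_mul (Real.log 2)).add hlog
      simpa using this
    have hmain : Filter.Tendsto (fun n : ℕ => Real.log ((n : ℝ) + 1) / (n : ℝ) ^ q)
        Filter.atTop (nhds 0) := by
      apply squeeze_zero'
      · filter_upwards [Filter.eventually_ge_atTop 1] with n hn
        have hn1 : (1 : ℝ) ≤ (n : ℝ) := by exact_mod_cast hn
        apply div_nonneg (Real.log_nonneg (by linarith)) (by positivity)
      · filter_upwards [Filter.eventually_ge_atTop 1] with n hn
        have hn1 : (1 : ℝ) ≤ (n : ℝ) := by exact_mod_cast hn
        have hle : Real.log ((n : ℝ) + 1) ≤ Real.log 2 + Real.log (n : ℝ) := by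
          rw [← Real.log_mul (by norm_num) (by linarith)]
          apply Real.log_le_log (by linarith)
          linarith
        have hpow : (0 : ℝ) < (n : ℝ) ^ q := by positivity
        rw [div_le_iff₀ hpow] at *
        calc Real.log ((n : ℝ) + 1) ≤ Real.log 2 + Real.log (n : ℝ) := hle
          _ = (Real.log 2 * ((n : ℝ) ^ q)⁻¹ + Real.log (n : ℝ) / (n : ℝ) ^ q) * (n : ℝ) ^ q := by
              field_simp
      · exact hupper
    have : Filter.Tendsto (fun n : ℕ => (Real.log 2)⁻¹ * (Real.log ((n : ℝ) + 1) / (n : ℝ) ^ q))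
        Filter.atTop (nhds 0) := by
      have := hmain.const_mul (Real.log 2)⁻¹
      simpa using this
    apply this.congr
    intro n
    unfold f
    rw [Real.logb]
    ring
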